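/- A simplicial complex K obtained by iteratively attaching simplices along (possibly empty) proper faces, starting from a simplex, has the property that every full subcomplex K_I is a disjoint union of contractible complexes (in particular all H̃_p(K_I) vanish for p ≥ 1). -/

import Mathlib

/-!
Full subcomplexes of a glued complex are again glued, so it suffices to show that a glued
complex `K` has no reduced homology in positive degrees, by induction along the gluing. A
simplex is acyclic, a cycle bounding its cone from a vertex. When `Δ_T` is attached along `σ`,
the boundary of the part of a cycle lying on `Δ_T` lives on the simplex `Δ_σ`; filling it there
and then filling the remainder inside `Δ_T` makes the cycle homologous to a cycle of `K`.
-/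

/-- The sign `ε(i, σ) = (-1)^{#{j ∈ σ : j < i}}`. -/
def eps {V : Type*} [LinearOrder V] (i : V) (σ : Finset V) : ℤ :=
  (-1) ^ (σ.filter (fun j => j < i)).card

/-- The augmented (reduced) simplicial chain module on finite subsets of `V`. -/
abbrev Ch (V : Type*) := Finset V →₀ ℤ

/-- The simplicial boundary `∂(σ) = Σ_{i ∈ σ} ε(i,σ) (σ \ {i})`. -/
noncomputable def bdry {V : Type*} [LinearOrder V] (x : Ch V) : Ch V :=
  x.sum fun σ c => ∑ i ∈ σ, (c * eps i σ) • Finsupp.single (σ.erase i) 1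

/-- The class of simplicial complexes obtained by iteratively attaching a simplex
along a (possibly empty) face, starting from a simplex: a simplex (the full power set
of a vertex set) belongs to the class, and if `K'` belongs to the class, `σ ∈ K'` is a
face, and `T` is the vertex set of a new simplex with `σ ⊂ T` a proper face of it
meeting the old complex exactly in `σ`, then `K' ∪ Δ_T` belongs to the class. -/
inductive GluedFromSimplices {V : Type*} [DecidableEq V] : Finset (Finset V) → Prop
  | simplex (S : Finset V) : GluedFromSimplices S.powerset
  | glue (K : Finset (Finset V)) (σ T : Finset V) :
      GluedFromSimplices K → σ ∈ K → σ ⊂ T → (∀ τ ∈ K, τ ∩ T ⊆ σ) →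
      GluedFromSimplices (K ∪ T.powerset)

open Finset

section Signs

variable {V : Type*} [LinearOrder V]

lemma eps_mul_self (i : V) (σ : Finset V) : eps i σ * eps i σ = 1 := by
  rw [eps, ← mul_pow]; norm_num

lemma eps_insert (i : V) {j : V} {σ : Finset V} (hj : j ∉ σ) :
    eps i (insert j σ) = (if j < i then -1 else 1) * eps i σ := by
  rw [eps, eps, filter_insert]
  split_ifs with hji
  · rw [card_insert_of_notMem fun h => hj (mem_of_mem_filter _ h), pow_succ, mul_comm]
  · rw [one_mul]

lemma eps_erase (i : V) {j : V} {σ : Finset V} (hj : j ∈ σ) :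
    eps i (σ.erase j) = (if j < i then -1 else 1) * eps i σ := by
  conv_rhs => rw [← insert_erase hj, eps_insert i (notMem_erase j σ), ← mul_assoc]
  split_ifs <;> norm_num

lemma eps_mul_eps_erase_swap {i j : V} {σ : Finset V} (hij : i ≠ j) (hi : i ∈ σ) (hj : j ∈ σ) :
    eps i σ * eps j (σ.erase i) = -(eps j σ * eps i (σ.erase j)) := by
  rw [eps_erase j hi, eps_erase i hj]
  rcases hij.lt_or_gt with h | h <;> simp [h, h.not_gt] <;> ring

lemma eps_mul_eps_insert_add_eps_mul_eps_erase {i v : V} {σ : Finset V} (hi : i ∈ σ)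
    (hv : v ∉ σ) : eps v σ * eps i (insert v σ) + eps i σ * eps v (σ.erase i) = 0 := by
  have hiv : i ≠ v := ne_of_mem_of_not_mem hi hv
  rw [eps_insert i hv, eps_erase v hi]
  rcases hiv.lt_or_gt with h | h <;> simp [h, h.not_gt] <;> ring

end Signs

lemma sum_sum_erase_eq_zero_of_antisymm {ι M : Type*} [DecidableEq ι] [AddCommGroup M]
    {s : Finset ι} {f : ι → ι → M} (hf : ∀ i ∈ s, ∀ j ∈ s, i ≠ j → f i j = -f j i) :
    ∑ i ∈ s, ∑ j ∈ s.erase i, f i j = 0 := by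
  rw [sum_sigma']
  refine sum_involution (fun x _ => ⟨x.2, x.1⟩) (fun x hx => ?_) (fun x hx _ => ?_)
    (fun x hx => ?_) (fun _ _ => rfl)
  all_goals
    obtain ⟨hi, hj⟩ := mem_sigma.1 hx
    obtain ⟨hji, hj⟩ := mem_erase.1 hj
  · rw [hf _ hi _ hj hji.symm, neg_add_cancel]
  · exact fun h => hji (congrArg Sigma.fst h)
  · exact mem_sigma.2 ⟨hj, mem_erase.2 ⟨hji.symm, hi⟩⟩

section Chains

variable {V : Type*} [LinearOrder V]

lemma bdry_zero : bdry (0 : Ch V) = 0 := Finsupp.sum_zero_index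

lemma bdry_add (x y : Ch V) : bdry (x + y) = bdry x + bdry y := by
  refine Finsupp.sum_add_index' (fun σ => by simp) fun σ c d => ?_
  rw [← sum_add_distrib]
  exact sum_congr rfl fun i _ => by rw [add_mul, add_smul]

noncomputable def bdryHom : Ch V →+ Ch V := AddMonoidHom.mk' bdry bdry_add

lemma bdryHom_apply (x : Ch V) : bdryHom x = bdry x := rfl

lemma bdry_sub (x y : Ch V) : bdry (x - y) = bdry x - bdry y := map_sub bdryHom x y

lemma bdry_single (σ : Finset V) (c : ℤ) :
    bdry (Finsupp.single σ c) = ∑ i ∈ σ, Finsupp.single (σ.erase i) (c * eps i σ) := by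
  rw [bdry, Finsupp.sum_single_index (by simp)]
  simp only [Finsupp.smul_single, smul_eq_mul, mul_one]

/-- `σ ↦ ε(v, σ) (σ ∪ {v})` for `v ∉ σ`, and `σ ↦ 0` for `v ∈ σ`. -/
noncomputable def cone (v : V) : Ch V →+ Ch V :=
  Finsupp.liftAddHom fun σ =>
    if v ∈ σ then 0 else (Finsupp.singleAddHom (insert v σ)).comp (AddMonoidHom.mulRight (eps v σ))

lemma cone_single (v : V) (σ : Finset V) (c : ℤ) :
    cone v (Finsupp.single σ c) =
      if v ∈ σ then 0 else Finsupp.single (insert v σ) (c * eps v σ) := by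
  rw [cone, Finsupp.liftAddHom_apply_single]
  split_ifs <;> rfl

lemma bdry_bdry_single (σ : Finset V) (c : ℤ) : bdry (bdry (Finsupp.single σ c)) = 0 := by
  rw [bdry_single, ← bdryHom_apply, map_sum]
  simp only [bdryHom_apply, bdry_single]
  refine sum_sum_erase_eq_zero_of_antisymm fun i hi j hj hij => ?_
  rw [erase_right_comm, ← Finsupp.single_neg]
  congr 1
  linear_combination c * eps_mul_eps_erase_swap hij hi hj

lemma bdry_bdry (x : Ch V) : bdry (bdry x) = 0 :=
  DFunLike.congr_fun (Finsupp.addHom_ext (f := bdryHom.comp bdryHom) (g := 0)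
    fun σ c => bdry_bdry_single σ c) x

lemma bdry_cone_single_add_cone_bdry_single (v : V) (σ : Finset V) (c : ℤ) :
    bdry (cone v (Finsupp.single σ c)) + cone v (bdry (Finsupp.single σ c)) =
      Finsupp.single σ c := by
  rw [cone_single, bdry_single, map_sum]
  by_cases hv : v ∈ σ
  · rw [if_pos hv, bdry_zero, zero_add, sum_eq_single_of_mem v hv fun i _ hiv => by
      rw [cone_single, if_pos (mem_erase.2 ⟨hiv.symm, hv⟩)]]
    rw [cone_single, if_neg (notMem_erase v σ), insert_erase hv, eps_erase v hv, if_neg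
      (lt_irrefl v), one_mul, mul_assoc, eps_mul_self, mul_one]
  · rw [if_neg hv, bdry_single, sum_insert hv, erase_insert hv, eps_insert v hv, if_neg
      (lt_irrefl v), one_mul, mul_assoc, eps_mul_self, mul_one, add_assoc, ← sum_add_distrib,
      add_eq_left]
    refine sum_eq_zero fun i hi => ?_
    have hiv : i ≠ v := ne_of_mem_of_not_mem hi hv
    rw [cone_single, if_neg fun h => hv (mem_of_mem_erase h), erase_insert_of_ne hiv.symm,
      ← Finsupp.single_add, ← Finsupp.single_zero (insert v (σ.erase i))]
    congr 1
    linear_combination c * eps_mul_eps_insert_add_eps_mul_eps_erase hi hv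

lemma bdry_cone_add_cone_bdry (v : V) (x : Ch V) : bdry (cone v x) + cone v (bdry x) = x :=
  DFunLike.congr_fun (Finsupp.addHom_ext
    (f := bdryHom.comp (cone v) + (cone v).comp bdryHom) (g := AddMonoidHom.id _)
    fun σ c => bdry_cone_single_add_cone_bdry_single v σ c) x

lemma bdry_cone_of_bdry_eq_zero (v : V) {x : Ch V} (hx : bdry x = 0) : bdry (cone v x) = x := by
  simpa [hx] using bdry_cone_add_cone_bdry v x

end Chains

section Supports

variable {V : Type*}

/-- Indexed by the number `n` of vertices, so these are the chains of dimension `n - 1`. -/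
def simplicialChains (K : Finset (Finset V)) (n : ℕ) : Submodule ℤ (Ch V) :=
  Finsupp.supported ℤ ℤ {σ | σ ∈ K ∧ σ.card = n}

lemma mem_simplicialChains {K : Finset (Finset V)} {n : ℕ} {x : Ch V} :
    x ∈ simplicialChains K n ↔ ∀ σ ∈ x.support, σ ∈ K ∧ σ.card = n :=
  Finsupp.mem_supported ℤ x

lemma simplicialChains_mono {K L : Finset (Finset V)} (h : K ⊆ L) (n : ℕ) :
    simplicialChains K n ≤ simplicialChains L n :=
  Finsupp.supported_mono fun _ hσ => ⟨h hσ.1, hσ.2⟩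

lemma simplicialChains_union [DecidableEq V] (K L : Finset (Finset V)) (n : ℕ) :
    simplicialChains (K ∪ L) n = simplicialChains K n ⊔ simplicialChains L n := by
  rw [simplicialChains, simplicialChains, simplicialChains, ← Finsupp.supported_union]
  congr 1
  ext σ
  simp [or_and_right]

lemma mem_simplicialChains_filter_subset [DecidableEq V] {K : Finset (Finset V)} {I : Finset V}
    {n : ℕ} {x : Ch V} :
    x ∈ simplicialChains (K.filter (· ⊆ I)) n ↔ ∀ σ ∈ x.support, σ ∈ K ∧ σ ⊆ I ∧ σ.card = n := by
  simp only [mem_simplicialChains, mem_filter, and_assoc]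

lemma isLowerSet_powerset (S : Finset V) : IsLowerSet (S.powerset : Set (Finset V)) :=
  fun _ _ hτσ hσ => mem_powerset.2 (subset_trans hτσ (mem_powerset.1 hσ))

end Supports

section Complexes

variable {V : Type*} [LinearOrder V]

lemma mem_support_bdry {x : Ch V} {ρ : Finset V} (hρ : ρ ∈ (bdry x).support) :
    ∃ σ ∈ x.support, ∃ i ∈ σ, ρ = σ.erase i := by
  obtain ⟨σ, hσ, hρσ⟩ := mem_biUnion.1 (Finsupp.support_sum hρ)
  obtain ⟨i, hi, hρi⟩ := mem_biUnion.1 (Finsupp.support_finsetSum hρσ)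
  exact ⟨σ, hσ, i, hi,
    mem_singleton.1 (Finsupp.support_single_subset (Finsupp.support_smul hρi))⟩

lemma mem_support_cone {v : V} {x : Ch V} {ρ : Finset V} (hρ : ρ ∈ (cone v x).support) :
    ∃ σ ∈ x.support, v ∉ σ ∧ ρ = insert v σ := by
  rw [cone, Finsupp.liftAddHom_apply] at hρ
  obtain ⟨σ, hσ, hρσ⟩ := mem_biUnion.1 (Finsupp.support_sum hρ)
  by_cases hv : v ∈ σ
  · simp [hv] at hρσ
  · simp only [hv, if_false, AddMonoidHom.comp_apply, Finsupp.singleAddHom_apply] at hρσ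
    exact ⟨σ, hσ, hv, mem_singleton.1 (Finsupp.support_single_subset hρσ)⟩

lemma bdry_mem_simplicialChains {K : Finset (Finset V)} (hK : IsLowerSet (K : Set (Finset V)))
    {n : ℕ} {x : Ch V} (hx : x ∈ simplicialChains K (n + 1)) : bdry x ∈ simplicialChains K n := by
  rw [mem_simplicialChains] at hx ⊢
  intro ρ hρ
  obtain ⟨σ, hσ, i, hi, rfl⟩ := mem_support_bdry hρ
  obtain ⟨hσK, hσn⟩ := hx σ hσ
  exact ⟨hK (erase_subset i σ) hσK, by rw [card_erase_of_mem hi, hσn, Nat.add_sub_cancel]⟩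

lemma cone_mem_simplicialChains_powerset {S : Finset V} {v : V} (hv : v ∈ S) {n : ℕ}
    {x : Ch V} (hx : x ∈ simplicialChains S.powerset n) :
    cone v x ∈ simplicialChains S.powerset (n + 1) := by
  rw [mem_simplicialChains] at hx ⊢
  intro ρ hρ
  obtain ⟨σ, hσ, hvσ, rfl⟩ := mem_support_cone hρ
  obtain ⟨hσS, hσn⟩ := hx σ hσ
  exact ⟨mem_powerset.2 (insert_subset hv (mem_powerset.1 hσS)),
    by rw [card_insert_of_notMem hvσ, hσn]⟩

/-- A cycle is the boundary of its cone from any vertex of its support. -/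
lemma exists_bdry_eq_of_mem_simplicialChains_powerset {S : Finset V} {n : ℕ} (hn : 0 < n)
    {x : Ch V} (hx : x ∈ simplicialChains S.powerset n) (hcyc : bdry x = 0) :
    ∃ y ∈ simplicialChains S.powerset (n + 1), bdry y = x := by
  obtain rfl | hx0 := eq_or_ne x 0
  · exact ⟨0, zero_mem _, bdry_zero⟩
  obtain ⟨σ, hσ⟩ := Finsupp.support_nonempty_iff.2 hx0
  obtain ⟨hσS, hσn⟩ := mem_simplicialChains.1 hx σ hσ
  obtain ⟨v, hv⟩ := card_pos.1 (hσn ▸ hn)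
  exact ⟨cone v x, cone_mem_simplicialChains_powerset (mem_powerset.1 hσS hv) hx,
    bdry_cone_of_bdry_eq_zero v hcyc⟩

end Complexes

namespace GluedFromSimplices

variable {V : Type*} [DecidableEq V] {K : Finset (Finset V)}

lemma isLowerSet (hK : GluedFromSimplices K) : IsLowerSet (K : Set (Finset V)) := by
  induction hK with
  | simplex S => exact isLowerSet_powerset S
  | glue K σ T _ _ _ _ ih =>
    rw [coe_union]
    exact ih.union (isLowerSet_powerset T)

/-- If the new simplex `T` meets `I` inside the gluing face `σ`, it adds nothing to the full
subcomplex on `I`; otherwise `T ∩ I` is glued along `σ ∩ I`. -/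
lemma filter_subset (hK : GluedFromSimplices K) (I : Finset V) :
    GluedFromSimplices (K.filter (· ⊆ I)) := by
  induction hK with
  | simplex S =>
    rw [show S.powerset.filter (· ⊆ I) = (S ∩ I).powerset by
      ext; simp only [mem_filter, mem_powerset, subset_inter_iff]]
    exact simplex _
  | glue K σ T hK hσK hσT hKT ih =>
    rw [filter_union, show T.powerset.filter (· ⊆ I) = (T ∩ I).powerset by
      ext; simp only [mem_filter, mem_powerset, subset_inter_iff]]
    by_cases hTI : T ∩ I ⊆ σ
    · rwa [union_eq_left.2 fun τ hτ => mem_filter.2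
        ⟨hK.isLowerSet ((mem_powerset.1 hτ).trans hTI) hσK,
          (mem_powerset.1 hτ).trans inter_subset_right⟩]
    · refine glue _ (σ ∩ I) _ ih
        (mem_filter.2 ⟨hK.isLowerSet inter_subset_left hσK, inter_subset_right⟩)
        ((inter_subset_inter_right hσT.subset).ssubset_of_not_subset fun h =>
          hTI (h.trans inter_subset_left)) fun τ hτ => ?_
      obtain ⟨hτK, hτI⟩ := mem_filter.1 hτ
      exact subset_inter ((inter_subset_inter subset_rfl inter_subset_left).trans (hKT τ hτK))
        (inter_subset_left.trans hτI)

end GluedFromSimplices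

section Homology

variable {V : Type*} [LinearOrder V]

/-- The part `x_T` of the cycle lying on `Δ_T` has its boundary on `Δ_σ`, where it bounds some
`z`; then `x_T - z` is a cycle of the simplex `Δ_T`, and `x_K + z` is a cycle of `K`. -/
lemma exists_eq_add_bdry_of_mem_simplicialChains_union {K : Finset (Finset V)} {σ T : Finset V}
    (hK : IsLowerSet (K : Set (Finset V))) (hσK : σ ∈ K) (hσT : σ ⊆ T)
    (hKT : ∀ τ ∈ K, τ ∩ T ⊆ σ) {n : ℕ} (hn : 0 < n) {x : Ch V}
    (hx : x ∈ simplicialChains (K ∪ T.powerset) (n + 1)) (hcyc : bdry x = 0) :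
    ∃ x' ∈ simplicialChains K (n + 1), bdry x' = 0 ∧
      ∃ y ∈ simplicialChains T.powerset (n + 2), x = x' + bdry y := by
  rw [simplicialChains_union] at hx
  obtain ⟨xK, hxK, xT, hxT, rfl⟩ := Submodule.mem_sup.1 hx
  have hbdry : bdry xT = -bdry xK := eq_neg_of_add_eq_zero_right (by rw [← bdry_add, hcyc])
  have hbdryT : bdry xT ∈ simplicialChains σ.powerset n := by
    have hbT := mem_simplicialChains.1 (bdry_mem_simplicialChains (isLowerSet_powerset T) hxT)
    have hbK := mem_simplicialChains.1 (hbdry ▸ neg_mem (bdry_mem_simplicialChains hK hxK))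
    refine mem_simplicialChains.2 fun ρ hρ => ⟨mem_powerset.2 ?_, (hbT ρ hρ).2⟩
    simpa [inter_eq_left.2 (mem_powerset.1 (hbT ρ hρ).1)] using hKT ρ (hbK ρ hρ).1
  obtain ⟨z, hz, hbz⟩ :=
    exists_bdry_eq_of_mem_simplicialChains_powerset hn hbdryT (bdry_bdry xT)
  obtain ⟨y, hy, hby⟩ := exists_bdry_eq_of_mem_simplicialChains_powerset n.succ_pos
    (sub_mem hxT (simplicialChains_mono (powerset_mono.2 hσT) _ hz))
    (by rw [bdry_sub, hbz, sub_self])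
  have hσ : σ.powerset ⊆ K := fun τ hτ => hK (mem_powerset.1 hτ) hσK
  refine ⟨xK + z, add_mem hxK (simplicialChains_mono hσ _ hz), ?_, y, hy, ?_⟩
  · rw [bdry_add, hbz, ← bdry_add, hcyc]
  · rw [hby]; abel

lemma GluedFromSimplices.exists_bdry_eq {K : Finset (Finset V)} (hK : GluedFromSimplices K)
    {n : ℕ} (hn : 0 < n) {x : Ch V} (hx : x ∈ simplicialChains K (n + 1)) (hcyc : bdry x = 0) :
    ∃ y ∈ simplicialChains K (n + 2), bdry y = x := by
  induction hK generalizing x with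
  | simplex S => exact exists_bdry_eq_of_mem_simplicialChains_powerset n.succ_pos hx hcyc
  | glue K σ T hK hσK hσT hKT ih =>
    obtain ⟨x', hx', hcyc', y, hy, rfl⟩ :=
      exists_eq_add_bdry_of_mem_simplicialChains_union hK.isLowerSet hσK hσT.subset hKT hn hx hcyc
    obtain ⟨y', hy', rfl⟩ := ih hx' hcyc'
    exact ⟨y' + y, add_mem (simplicialChains_mono subset_union_left _ hy')
      (simplicialChains_mono subset_union_right _ hy), bdry_add y' y⟩

end Homology

/-- A simplicial complex obtained by iteratively attaching simplices along (possibly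
empty) proper faces, starting from a simplex, has the property that every full
subcomplex `K_I` is a disjoint union of contractible complexes; in particular all
`H̃_p(K_I)` vanish for `p ≥ 1`: every reduced `p`-cycle of `K_I` is a boundary. -/
theorem glued_full_subcomplexes_no_higher_homology {V : Type*} [LinearOrder V]
    (K : Finset (Finset V)) (hK : GluedFromSimplices K) :
    ∀ (I : Finset V) (p : ℕ), 1 ≤ p →
      ∀ x : Ch V, (∀ σ ∈ x.support, σ ∈ K ∧ σ ⊆ I ∧ σ.card = p + 1) → bdry x = 0 →
        ∃ y : Ch V, (∀ σ ∈ y.support, σ ∈ K ∧ σ ⊆ I ∧ σ.card = p + 2) ∧ bdry y = x := by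
  intro I p hp x hx hcyc
  obtain ⟨y, hy, rfl⟩ :=
    (hK.filter_subset I).exists_bdry_eq hp (mem_simplicialChains_filter_subset.2 hx) hcyc
  exact ⟨y, mem_simplicialChains_filter_subset.1 hy, rfl⟩
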